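/- Let R be a commutative ring, and let A and B be recurrence operators on sequences ℤ → R with coefficient sequences a_0,…,a_p and b_0,…,b_q respectively, i.e. A(w)(n) = ∑_{i=0}^p a_i(n) w(n+i) and B(w)(n) = ∑_{j=0}^q b_j(n) w(n+j). Then the composite operator A∘B is the operator with coefficient sequences c_k(n) = ∑_{i+j=k} a_i(n) b_j(n+i) for 0 ≤ k ≤ p+q, and the adjoint of the composite equals the composite of the adjoints in reverse order: for every sequence u : ℤ → R and every n ∈ ℤ, ∑_{k=0}^{p+q} c_k(n−k) u(n−k) = B*(A*(u))(n). -/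

import Mathlib

/-- The adjoint of the composite of two recurrence operators `A∘B` (with composite
coefficients `c_k(n) = ∑_{i+j=k} a_i(n) b_j(n+i)`) equals the composite of the adjoints
in the reverse order: `(A∘B)*(u)(n) = B*(A*(u))(n)`. -/
theorem adjoint_of_composite (R : Type*) [CommRing R] (p q : ℕ)
    (a b : ℕ → ℤ → R) (u : ℤ → R) (n : ℤ) :
    (∑ k ∈ Finset.range (p + q + 1),
        (∑ i ∈ Finset.range (p + 1), ∑ j ∈ Finset.range (q + 1),
          if i + j = k then a i (n - k) * b j ((n - k) + i) else 0) * u (n - k)) =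
    ∑ j ∈ Finset.range (q + 1), b j (n - j) *
      (∑ i ∈ Finset.range (p + 1), a i ((n - j) - i) * u ((n - j) - i)) := by
  have L : (∑ k ∈ Finset.range (p + q + 1),
        (∑ i ∈ Finset.range (p + 1), ∑ j ∈ Finset.range (q + 1),
          if i + j = k then a i (n - k) * b j ((n - k) + i) else 0) * u (n - k)) =
      ∑ i ∈ Finset.range (p + 1), ∑ j ∈ Finset.range (q + 1),
        a i (n - j - i) * b j (n - j) * u (n - j - i) := by
    calc (∑ k ∈ Finset.range (p + q + 1),
        (∑ i ∈ Finset.range (p + 1), ∑ j ∈ Finset.range (q + 1),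
          if i + j = k then a i (n - k) * b j ((n - k) + i) else 0) * u (n - k))
        = ∑ k ∈ Finset.range (p + q + 1), ∑ i ∈ Finset.range (p + 1),
            ∑ j ∈ Finset.range (q + 1),
            (if i + j = k then a i (n - k) * b j ((n - k) + i) else 0) * u (n - k) := by
          simp [Finset.sum_mul]
      _ = ∑ i ∈ Finset.range (p + 1), ∑ k ∈ Finset.range (p + q + 1),
            ∑ j ∈ Finset.range (q + 1),
            (if i + j = k then a i (n - k) * b j ((n - k) + i) else 0) * u (n - k) :=
          Finset.sum_comm
      _ = ∑ i ∈ Finset.range (p + 1), ∑ j ∈ Finset.range (q + 1),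
            ∑ k ∈ Finset.range (p + q + 1),
            (if i + j = k then a i (n - k) * b j ((n - k) + i) else 0) * u (n - k) :=
          Finset.sum_congr rfl fun i _ => Finset.sum_comm
      _ = ∑ i ∈ Finset.range (p + 1), ∑ j ∈ Finset.range (q + 1),
            a i (n - j - i) * b j (n - j) * u (n - j - i) := by
          refine Finset.sum_congr rfl fun i hi => Finset.sum_congr rfl fun j hj => ?_
          rw [Finset.sum_eq_single (i + j)]
          · have h1 : (n : ℤ) - (i + j : ℕ) + i = n - j := by push_cast; ring
            have h2 : (n : ℤ) - (i + j : ℕ) = n - j - i := by push_cast; ring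
            rw [if_pos rfl, h1, h2]
          · intro k _ hk; rw [if_neg (fun h => hk h.symm), zero_mul]
          · intro h
            exact absurd (Finset.mem_range.mpr (by
              have := Finset.mem_range.mp hi; have := Finset.mem_range.mp hj; omega)) h
  rw [L, Finset.sum_comm]
  refine Finset.sum_congr rfl fun j _ => ?_
  rw [Finset.mul_sum]
  exact Finset.sum_congr rfl fun i _ => by ring
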